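/- Let M be a matroid on a finite ground set E with rank function r, and let q be a rational with 0 < q < 1. Suppose 𝛄 is a weight function such that: γ_e > -1 for every loop e; γ_e < -q for every coloop e; and -1 - √(1-q) < γ_e < -1 + √(1-q) for every element e that is neither a loop nor a coloop. Then (-1)^{r(E)} · Z̃(M;q,𝛄) > 0. -/

import Mathlib

/-- A matroid on a finite ground set `E`, presented by its rank function. -/
structure RankMatroid (α : Type) [DecidableEq α] where
  /-- the ground set -/
  E : Finset α
  /-- the rank function -/
  r : Finset α → ℕ
  rank_le_card : ∀ A, A ⊆ E → r A ≤ A.card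
  rank_mono : ∀ A B, A ⊆ B → B ⊆ E → r A ≤ r B
  rank_submodular : ∀ A B, A ⊆ E → B ⊆ E → r (A ∪ B) + r (A ∩ B) ≤ r A + r B

/-- The multivariate matroid Tutte polynomial
`Z̃(M;q,𝛄) = Σ_{A⊆E} q^{-r(A)} ∏_{e∈A} γ_e`. -/
noncomputable def Zt {α : Type} [DecidableEq α] (M : RankMatroid α) (q : ℚ) (w : α → ℚ) : ℚ :=
  ∑ A ∈ M.E.powerset, q ^ (-(M.r A : ℤ)) * ∏ e ∈ A, w e

/-- A loop of a matroid: an element of the ground set of rank `0`. -/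
def RankMatroid.IsLoop {α : Type} [DecidableEq α] (M : RankMatroid α) (e : α) : Prop :=
  e ∈ M.E ∧ M.r {e} = 0

/-- A basis of a matroid: an independent subset of the ground set of full rank. -/
def RankMatroid.IsBasis {α : Type} [DecidableEq α] (M : RankMatroid α) (B : Finset α) : Prop :=
  B ⊆ M.E ∧ M.r B = B.card ∧ M.r B = M.r M.E

/-- A coloop of a matroid: an element belonging to every basis. -/
def RankMatroid.IsColoop {α : Type} [DecidableEq α] (M : RankMatroid α) (e : α) : Prop :=
  e ∈ M.E ∧ ∀ B : Finset α, M.IsBasis B → e ∈ B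

/-!
Induction on the size of the ground set, via the reduction rules for `Z̃`.
A loop `e` gives `Z̃(M) = (1 + γ_e) Z̃(M∖e)` and a coloop `Z̃(M) = (1 + γ_e/q) Z̃(M∖e)`, and the
hypotheses on `γ_e` make these factors positive, resp. negative (the rank drops by one).
Without loops and coloops every weight lies in the window `|1 + γ| < √(1-q)`. A parallel pair
`e, f` may then be merged into `e` with weight `(1 + γ_e)(1 + γ_f) - 1`, and a series pair
contracted to `e` with weight `γ_e γ_f / (q + γ_e + γ_f)` at the cost of the negative factor
`1 + (γ_e + γ_f)/q`; in both cases the new weight is again admissible (after merging, `e` may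
have become a coloop, and the merged weight is also `< -q`). Otherwise `M∖e` has no coloops and
`M/e` no loops for every `e`, and deletion-contraction
`Z̃(M) = Z̃(M∖e) + (γ_e/q) Z̃(M/e)` with `γ_e < 0` writes `(-1)^{r(E)} Z̃(M)` as a sum of two
positive terms.
-/

theorem Finset.sum_powerset_eq_sum_powerset_erase {α β : Type*} [DecidableEq α] [AddCommMonoid β]
    {s : Finset α} {a : α} (ha : a ∈ s) (F : Finset α → β) :
    ∑ A ∈ s.powerset, F A = ∑ A ∈ (s.erase a).powerset, (F A + F (insert a A)) := by
  conv_lhs => rw [← Finset.insert_erase ha]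
  rw [Finset.sum_powerset_insert (Finset.notMem_erase a s), Finset.sum_add_distrib]

theorem Finset.insert_erase_erase {α : Type*} [DecidableEq α] {s : Finset α} {a b : α}
    (ha : a ∈ s) (hba : b ≠ a) : insert a ((s.erase a).erase b) = s.erase b := by
  rw [Finset.erase_right_comm, Finset.insert_erase (Finset.mem_erase.2 ⟨hba.symm, ha⟩)]

def parallelWeight (x y : ℚ) : ℚ := x + y + x * y

def seriesWeight (q x y : ℚ) : ℚ := x * y / (q + x + y)

theorem parallelWeight_bounds {q x y : ℚ} (hq : 0 ≤ q) (hx : (1 + x) ^ 2 < 1 - q)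
    (hy : (1 + y) ^ 2 < 1 - q) :
    parallelWeight x y < -q ∧ (1 + parallelWeight x y) ^ 2 < 1 - q := by
  have hxy : 1 + parallelWeight x y = (1 + x) * (1 + y) := by rw [parallelWeight]; ring
  have ht : 0 < 1 - q := (sq_nonneg _).trans_lt hx
  have hsq : ((1 + x) * (1 + y)) ^ 2 < (1 - q) ^ 2 := by
    rw [mul_pow, sq (1 - q)]
    exact mul_lt_mul'' hx hy (sq_nonneg _) (sq_nonneg _)
  have := (abs_lt.1 (abs_lt_of_sq_lt_sq hsq ht.le)).2
  exact ⟨by linarith, by rw [hxy]; nlinarith⟩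

theorem sq_mul_sub_lt_mul_sq {t a b : ℚ} (ha : a ^ 2 < t) (hb : b ^ 2 < t) :
    (a * b - t) ^ 2 < t * (a + b - 1 - t) ^ 2 := by
  set s := √(t : ℝ)
  have hs2 : s ^ 2 = t := Real.sq_sqrt (by exact_mod_cast (sq_nonneg a).trans ha.le)
  have hlt : ∀ c : ℚ, c ^ 2 < t → -s < c ∧ (c : ℝ) < s := fun c hc =>
    abs_lt.1 <| (Real.lt_sqrt (abs_nonneg _)).2 (by rw [sq_abs]; exact_mod_cast hc)
  obtain ⟨ha₁, ha₂⟩ := hlt a ha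
  obtain ⟨hb₁, hb₂⟩ := hlt b hb
  have hs0 : 0 < s := by linarith
  -- With `s = √t` the difference factors as `(s D - (ab - t)) (s D + (ab - t))`,
  -- `D = a + b - 1 - t`, and both factors are negative.
  have h₁ : s * (a + b - 1 - s ^ 2) - (a * b - s ^ 2) < 0 := by
    nlinarith [mul_pos (sub_pos.2 ha₂) (sub_pos.2 hb₂), mul_nonneg hs0.le (sq_nonneg (1 - s))]
  have h₂ : s * (a + b - 1 - s ^ 2) + (a * b - s ^ 2) < 0 := by
    nlinarith [mul_pos (sub_pos.2 ha₂) (neg_lt_iff_pos_add.1 hb₁), mul_pos hs0 (sub_pos.2 hb₂),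
      mul_nonneg hs0.le (sq_nonneg (1 - s))]
  have : ((a * b - t) ^ 2 : ℝ) < t * (a + b - 1 - t) ^ 2 := by
    rw [← hs2]
    nlinarith [mul_pos_of_neg_of_neg h₁ h₂]
  exact_mod_cast this

theorem seriesWeight_bounds {q x y : ℚ} (hx : (1 + x) ^ 2 < 1 - q) (hy : (1 + y) ^ 2 < 1 - q) :
    q + x + y < 0 ∧ (1 + seriesWeight q x y) ^ 2 < 1 - q := by
  have hD : q + x + y < 0 := by
    by_contra! h
    nlinarith [sq_nonneg (x - y), sq_nonneg q, mul_nonneg h h]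
  have hxy : 1 + seriesWeight q x y =
      ((1 + x) * (1 + y) - (1 - q)) / ((1 + x) + (1 + y) - 1 - (1 - q)) := by
    rw [show (1 + x) + (1 + y) - 1 - (1 - q) = q + x + y by ring, seriesWeight,
      eq_div_iff hD.ne, add_mul, div_mul_cancel₀ _ hD.ne]
    ring
  refine ⟨hD, ?_⟩
  rw [hxy, div_pow, div_lt_iff₀ (by nlinarith)]
  exact sq_mul_sub_lt_mul_sq hx hy

theorem one_add_sq_lt_of_lt_sqrt {q x : ℚ}
    (h : -1 - Real.sqrt (1 - q) < (x : ℝ) ∧ (x : ℝ) < -1 + Real.sqrt (1 - q)) :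
    (1 + x) ^ 2 < 1 - q := by
  have : |(1 + x : ℝ)| < Real.sqrt (1 - q) := abs_lt.2 ⟨by linarith, by linarith⟩
  rw [Real.lt_sqrt (abs_nonneg _), sq_abs] at this
  exact_mod_cast this

namespace RankMatroid

variable {α : Type} [DecidableEq α] (M : RankMatroid α) {A B : Finset α} {e f g : α}

theorem rank_empty : M.r ∅ = 0 :=
  Nat.le_zero.mp (M.rank_le_card ∅ (Finset.empty_subset _))

theorem rank_singleton_le_one (he : e ∈ M.E) : M.r {e} ≤ 1 := by
  simpa using M.rank_le_card {e} (Finset.singleton_subset_iff.2 he)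

theorem rank_le_rank_insert (hA : A ⊆ M.E) (he : e ∈ M.E) : M.r A ≤ M.r (insert e A) :=
  M.rank_mono _ _ (Finset.subset_insert e A) (Finset.insert_subset he hA)

theorem rank_insert_add_le (hAB : A ⊆ B) (hB : B ⊆ M.E) (he : e ∈ M.E) :
    M.r (insert e B) + M.r A ≤ M.r (insert e A) + M.r B := by
  by_cases heB : e ∈ B
  · rw [Finset.insert_eq_of_mem heB]
    have := M.rank_le_rank_insert (hAB.trans hB) he
    omega
  · have h := M.rank_submodular (insert e A) B (Finset.insert_subset he (hAB.trans hB)) hB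
    rwa [Finset.insert_union, Finset.union_eq_right.2 hAB, Finset.insert_inter_of_notMem heB,
      Finset.inter_eq_left.2 hAB] at h

theorem rank_insert_le (hA : A ⊆ M.E) (he : e ∈ M.E) : M.r (insert e A) ≤ M.r A + M.r {e} := by
  have := M.rank_insert_add_le (Finset.empty_subset A) hA he
  rw [rank_empty, insert_empty_eq] at this
  omega

theorem rank_singleton_eq_one (he : e ∈ M.E) (hnl : ¬ M.IsLoop e) : M.r {e} = 1 := by
  have := M.rank_singleton_le_one he
  have : M.r {e} ≠ 0 := fun h => hnl ⟨he, h⟩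
  omega

theorem rank_insert_of_isLoop (he : M.IsLoop e) (hA : A ⊆ M.E) : M.r (insert e A) = M.r A := by
  have := M.rank_insert_le hA he.1
  have := M.rank_le_rank_insert hA he.1
  rw [he.2] at *
  omega

theorem rank_insert_of_rank_pair_le (hef : M.r {e, f} ≤ M.r {e}) (hf : f ∈ M.E) (heA : e ∈ A)
    (hA : A ⊆ M.E) : M.r (insert f A) = M.r A := by
  have := M.rank_insert_add_le (Finset.singleton_subset_iff.2 heA) hA hf
  have := M.rank_le_rank_insert hA hf
  rw [Finset.pair_comm] at hef
  omega

theorem rank_union_eq_of_forall_rank_insert_eq (hA : A ⊆ M.E) (hB : B ⊆ M.E)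
    (h : ∀ x ∈ B, M.r (insert x A) = M.r A) : M.r (A ∪ B) = M.r A := by
  induction B using Finset.induction_on with
  | empty => rw [Finset.union_empty]
  | insert x B hxB ih =>
    obtain ⟨hx, hB⟩ := Finset.insert_subset_iff.1 hB
    have hAB : A ∪ B ⊆ M.E := Finset.union_subset hA hB
    have := M.rank_insert_add_le Finset.subset_union_left hAB hx
    have := M.rank_le_rank_insert hAB hx
    rw [Finset.union_insert]
    rw [h x (Finset.mem_insert_self x B), ih hB fun y hy => h y (Finset.mem_insert_of_mem hy)] at *
    omega

theorem exists_indep_subset_rank_eq (hA : A ⊆ M.E) :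
    ∃ I ⊆ A, M.r I = I.card ∧ M.r I = M.r A := by
  obtain ⟨I, hI, hmax⟩ := (A.powerset.filter fun I => M.r I = I.card).exists_max_image
    Finset.card ⟨∅, by simp [rank_empty]⟩
  obtain ⟨hIA, hI⟩ := Finset.mem_filter.1 hI
  rw [Finset.mem_powerset] at hIA
  have hIE := hIA.trans hA
  have hspan : ∀ x ∈ A, M.r (insert x I) = M.r I := by
    intro x hx
    by_cases hxI : x ∈ I
    · rw [Finset.insert_eq_of_mem hxI]
    by_contra hne
    have := M.rank_insert_le hIE (hA hx)
    have := M.rank_le_rank_insert hIE (hA hx)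
    have := M.rank_singleton_le_one (hA hx)
    have := hmax (insert x I) <| Finset.mem_filter.2 ⟨Finset.mem_powerset.2
      (Finset.insert_subset hx hIA), by rw [Finset.card_insert_of_notMem hxI]; omega⟩
    rw [Finset.card_insert_of_notMem hxI] at this
    omega
  refine ⟨I, hIA, hI, ?_⟩
  rw [← M.rank_union_eq_of_forall_rank_insert_eq hIE hA hspan, Finset.union_eq_right.2 hIA]

theorem isColoop_iff : M.IsColoop e ↔ e ∈ M.E ∧ M.r (M.E.erase e) < M.r M.E := by
  refine ⟨fun ⟨he, hB⟩ => ⟨he, ?_⟩, fun ⟨he, hlt⟩ => ⟨he, fun B hB => ?_⟩⟩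
  · by_contra! hle
    obtain ⟨I, hIE, hI, hIr⟩ := M.exists_indep_subset_rank_eq (Finset.erase_subset e M.E)
    have := M.rank_mono _ _ (Finset.erase_subset e M.E) subset_rfl
    exact Finset.notMem_erase e M.E
      (hIE (hB I ⟨hIE.trans (Finset.erase_subset e M.E), hI, by omega⟩))
  · by_contra heB
    have := M.rank_mono B _ (Finset.subset_erase.2 ⟨hB.1, heB⟩) (Finset.erase_subset e M.E)
    have := hB.2.2
    omega

theorem rank_insert_of_isColoop (he : M.IsColoop e) (hA : A ⊆ M.E.erase e) :
    M.r (insert e A) = M.r A + 1 := by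
  obtain ⟨heE, hlt⟩ := M.isColoop_iff.1 he
  have := M.rank_insert_add_le hA (Finset.erase_subset e M.E) heE
  have := M.rank_insert_le (hA.trans (Finset.erase_subset e M.E)) heE
  have := M.rank_singleton_le_one heE
  rw [Finset.insert_erase heE] at *
  omega

def delete (e : α) : RankMatroid α where
  E := M.E.erase e
  r := M.r
  rank_le_card A hA := M.rank_le_card A (hA.trans (Finset.erase_subset e M.E))
  rank_mono A B hAB hB := M.rank_mono A B hAB (hB.trans (Finset.erase_subset e M.E))
  rank_submodular A B hA hB :=
    M.rank_submodular A B (hA.trans (Finset.erase_subset e M.E))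
      (hB.trans (Finset.erase_subset e M.E))

def contract (e : α) (he : e ∈ M.E) : RankMatroid α where
  E := M.E.erase e
  r A := M.r (insert e A) - M.r {e}
  rank_le_card A hA := by
    have := M.rank_insert_le (hA.trans (Finset.erase_subset e M.E)) he
    have := M.rank_le_card A (hA.trans (Finset.erase_subset e M.E))
    omega
  rank_mono A B hAB hB := by
    have := M.rank_mono _ _ (Finset.insert_subset_insert e hAB)
      (Finset.insert_subset he (hB.trans (Finset.erase_subset e M.E)))
    omega
  rank_submodular A B hA hB := by
    have hAE := Finset.insert_subset he (hA.trans (Finset.erase_subset e M.E))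
    have hBE := Finset.insert_subset he (hB.trans (Finset.erase_subset e M.E))
    have h := M.rank_submodular _ _ hAE hBE
    rw [← Finset.insert_union_distrib, ← Finset.insert_inter_distrib] at h
    have := M.rank_mono {e} (insert e (A ∩ B)) (by simp)
      ((Finset.insert_subset_insert e Finset.inter_subset_left).trans hAE)
    have := M.rank_mono {e} _ (by simp) hAE
    have := M.rank_mono _ _ (Finset.insert_subset_insert e Finset.subset_union_left)
      (Finset.insert_subset he (Finset.union_subset (hA.trans (Finset.erase_subset e M.E))
        (hB.trans (Finset.erase_subset e M.E))))
    have := M.rank_mono {e} _ (by simp) hBE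
    omega

variable {M} {q : ℚ} {w : α → ℚ}

@[simp] theorem delete_E : (M.delete e).E = M.E.erase e := rfl

@[simp] theorem delete_r : (M.delete e).r = M.r := rfl

@[simp] theorem contract_E (he : e ∈ M.E) : (M.contract e he).E = M.E.erase e := rfl

theorem contract_r (he : e ∈ M.E) (A : Finset α) :
    (M.contract e he).r A = M.r (insert e A) - M.r {e} := rfl

theorem isLoop_delete_iff : (M.delete e).IsLoop g ↔ g ≠ e ∧ M.IsLoop g := by
  simp [IsLoop, and_assoc]

theorem isLoop_contract_iff (he : e ∈ M.E) :
    (M.contract e he).IsLoop g ↔ g ≠ e ∧ g ∈ M.E ∧ M.r {e, g} ≤ M.r {e} := by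
  simp [IsLoop, contract_r, Nat.sub_eq_zero_iff_le, and_assoc]

theorem isColoop_delete_iff_of_rank_insert {c : ℕ} (he : e ∈ M.E) (hg : g ≠ e)
    (hc : ∀ A, (M.E.erase e).erase g ⊆ A → A ⊆ M.E.erase e → M.r (insert e A) = M.r A + c) :
    (M.delete e).IsColoop g ↔ M.IsColoop g := by
  have h₁ := hc _ subset_rfl (Finset.erase_subset g _)
  have h₂ := hc _ (Finset.erase_subset g _) subset_rfl
  rw [Finset.insert_erase_erase he hg] at h₁
  rw [Finset.insert_erase he] at h₂
  rw [isColoop_iff, isColoop_iff, delete_E, delete_r, Finset.mem_erase]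
  constructor
  · rintro ⟨⟨-, hgE⟩, hlt⟩
    exact ⟨hgE, by omega⟩
  · rintro ⟨hgE, hlt⟩
    exact ⟨⟨hg, hgE⟩, by omega⟩

theorem isColoop_contract_iff (he : e ∈ M.E) (hg : g ≠ e) :
    (M.contract e he).IsColoop g ↔ M.IsColoop g := by
  rw [isColoop_iff, isColoop_iff, contract_E, contract_r, contract_r, Finset.mem_erase,
    Finset.insert_erase_erase he hg, Finset.insert_erase he]
  have := M.rank_mono {e} (M.E.erase g)
    (Finset.singleton_subset_iff.2 (Finset.mem_erase.2 ⟨hg.symm, he⟩)) (Finset.erase_subset g _)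
  constructor
  · rintro ⟨⟨-, hgE⟩, hlt⟩
    exact ⟨hgE, by omega⟩
  · rintro ⟨hgE, hlt⟩
    exact ⟨⟨hg, hgE⟩, by omega⟩

theorem Zt_eq_sum_inv_pow (M : RankMatroid α) (q : ℚ) (w : α → ℚ) :
    Zt M q w = ∑ A ∈ M.E.powerset, q⁻¹ ^ M.r A * ∏ x ∈ A, w x := by
  simp only [Zt, zpow_neg, zpow_natCast, inv_pow]

theorem Zt_eq_sum_powerset_erase (he : e ∈ M.E) :
    Zt M q w = ∑ A ∈ (M.E.erase e).powerset,
      (q⁻¹ ^ M.r A + q⁻¹ ^ M.r (insert e A) * w e) * ∏ x ∈ A, w x := by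
  rw [Zt_eq_sum_inv_pow, Finset.sum_powerset_eq_sum_powerset_erase he]
  refine Finset.sum_congr rfl fun A hA => ?_
  rw [Finset.prod_insert fun h => Finset.notMem_erase e M.E (Finset.mem_powerset.1 hA h)]
  ring

theorem Zt_eq_sum_powerset_erase_erase (he : e ∈ M.E) (hf : f ∈ M.E) (hef : e ≠ f) :
    Zt M q w = ∑ A ∈ ((M.E.erase f).erase e).powerset,
      (q⁻¹ ^ M.r A + q⁻¹ ^ M.r (insert e A) * w e + q⁻¹ ^ M.r (insert f A) * w f
        + q⁻¹ ^ M.r (insert f (insert e A)) * (w e * w f)) * ∏ x ∈ A, w x := by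
  rw [Zt_eq_sum_powerset_erase hf,
    Finset.sum_powerset_eq_sum_powerset_erase (Finset.mem_erase.2 ⟨hef, he⟩)]
  refine Finset.sum_congr rfl fun A hA => ?_
  rw [Finset.prod_insert fun h => Finset.notMem_erase e _ (Finset.mem_powerset.1 hA h)]
  ring

theorem Zt_eq_mul_Zt_delete_of_isLoop (he : M.IsLoop e) :
    Zt M q w = (1 + w e) * Zt (M.delete e) q w := by
  rw [Zt_eq_sum_powerset_erase he.1, Zt_eq_sum_inv_pow (M.delete e), Finset.mul_sum]
  refine Finset.sum_congr rfl fun A hA => ?_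
  rw [M.rank_insert_of_isLoop he ((Finset.mem_powerset.1 hA).trans (Finset.erase_subset e M.E))]
  simp only [delete_r]
  ring

theorem Zt_eq_mul_Zt_delete_of_isColoop (he : M.IsColoop e) :
    Zt M q w = (1 + q⁻¹ * w e) * Zt (M.delete e) q w := by
  rw [Zt_eq_sum_powerset_erase he.1, Zt_eq_sum_inv_pow (M.delete e), Finset.mul_sum]
  refine Finset.sum_congr rfl fun A hA => ?_
  rw [M.rank_insert_of_isColoop he (Finset.mem_powerset.1 hA)]
  simp only [delete_r]
  ring

theorem Zt_eq_Zt_delete_add_Zt_contract (he : e ∈ M.E) :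
    Zt M q w = Zt (M.delete e) q w + q⁻¹ ^ M.r {e} * w e * Zt (M.contract e he) q w := by
  rw [Zt_eq_sum_powerset_erase he, Zt_eq_sum_inv_pow (M.delete e),
    Zt_eq_sum_inv_pow (M.contract e he), delete_E, contract_E, Finset.mul_sum,
    ← Finset.sum_add_distrib]
  refine Finset.sum_congr rfl fun A hA => ?_
  have hAE := (Finset.mem_powerset.1 hA).trans (Finset.erase_subset e M.E)
  have := M.rank_mono {e} (insert e A) (by simp) (Finset.insert_subset he hAE)
  obtain ⟨k, hk⟩ := Nat.exists_eq_add_of_le this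
  rw [delete_r, contract_r, hk, Nat.add_sub_cancel_left, pow_add]
  ring

theorem Zt_eq_Zt_delete_of_parallel (he : e ∈ M.E) (hf : f ∈ M.E) (hef : e ≠ f)
    (hpar : M.r {e, f} ≤ 1) (hre : M.r {e} = 1) (hrf : M.r {f} = 1) :
    Zt M q w = Zt (M.delete f) q (Function.update w e (parallelWeight (w e) (w f))) := by
  rw [Zt_eq_sum_powerset_erase_erase he hf hef,
    Zt_eq_sum_powerset_erase (M := M.delete f) (Finset.mem_erase.2 ⟨hef, he⟩)]
  refine Finset.sum_congr rfl fun A hA => ?_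
  have hAE : A ⊆ M.E := (Finset.mem_powerset.1 hA).trans
    ((Finset.erase_subset e _).trans (Finset.erase_subset f _))
  have heA : e ∉ A := fun h => Finset.notMem_erase e _ (Finset.mem_powerset.1 hA h)
  have hfe : M.r (insert f (insert e A)) = M.r (insert e A) :=
    M.rank_insert_of_rank_pair_le (by omega) hf (Finset.mem_insert_self e A)
      (Finset.insert_subset he hAE)
  have hef' : M.r (insert e (insert f A)) = M.r (insert f A) :=
    M.rank_insert_of_rank_pair_le (by rw [Finset.pair_comm]; omega) he
      (Finset.mem_insert_self f A) (Finset.insert_subset hf hAE)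
  rw [Finset.insert_comm, hfe] at hef'
  rw [Finset.prod_congr rfl fun x hx => Function.update_of_ne (ne_of_mem_of_not_mem hx heA) _ _,
    Function.update_self, delete_r, hfe, hef', parallelWeight]
  ring

theorem isColoop_delete_of_isColoop_delete (hf : f ∈ M.E) (hser : (M.delete f).IsColoop e)
    (heC : ¬ M.IsColoop e) : (M.delete e).IsColoop f := by
  obtain ⟨hef, he⟩ := Finset.mem_erase.1 hser.1
  have hlt := ((M.delete f).isColoop_iff.1 hser).2
  have := M.rank_mono (M.E.erase f) M.E (Finset.erase_subset f M.E) subset_rfl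
  have : M.r M.E ≤ M.r (M.E.erase e) := not_lt.1 fun h => heC (M.isColoop_iff.2 ⟨he, h⟩)
  refine (M.delete e).isColoop_iff.2 ⟨Finset.mem_erase.2 ⟨hef.symm, hf⟩, ?_⟩
  simp only [delete_E, delete_r] at hlt ⊢
  rw [Finset.erase_right_comm] at hlt
  omega

theorem Zt_eq_mul_Zt_contract_of_series (hq : q ≠ 0) (he : e ∈ M.E) (hf : f ∈ M.E)
    (hser : (M.delete f).IsColoop e) (heC : ¬ M.IsColoop e) (hD : q + w e + w f ≠ 0) :
    Zt M q w = (1 + q⁻¹ * (w e + w f)) *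
      Zt (M.contract f hf) q (Function.update w e (seriesWeight q (w e) (w f))) := by
  have hef : e ≠ f := Finset.ne_of_mem_erase hser.1
  have hfe := isColoop_delete_of_isColoop_delete hf hser heC
  rw [Zt_eq_sum_powerset_erase_erase he hf hef,
    Zt_eq_sum_powerset_erase (M := M.contract f hf) (Finset.mem_erase.2 ⟨hef, he⟩), Finset.mul_sum]
  refine Finset.sum_congr rfl fun A hA => ?_
  have hAfe := Finset.mem_powerset.1 hA
  have heA : e ∉ A := fun h => Finset.notMem_erase e _ (hAfe h)
  have hre : M.r (insert e A) = M.r A + 1 := (M.delete f).rank_insert_of_isColoop hser hAfe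
  have hrf : M.r (insert f A) = M.r A + 1 :=
    (M.delete e).rank_insert_of_isColoop hfe (Finset.erase_right_comm (s := M.E) ▸ hAfe)
  have hrf₀ : M.r {f} = 1 := by
    simpa [rank_empty] using (M.delete e).rank_insert_of_isColoop hfe (Finset.empty_subset _)
  obtain ⟨k, hk⟩ : ∃ k, M.r (insert f (insert e A)) = k + 1 :=
    Nat.exists_eq_add_of_le' <| hrf₀ ▸ M.rank_mono {f} _ (by simp)
      (Finset.insert_subset hf (Finset.insert_subset he
        (hAfe.trans ((Finset.erase_subset e _).trans (Finset.erase_subset f _)))))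
  rw [Finset.prod_congr rfl fun x hx => Function.update_of_ne (ne_of_mem_of_not_mem hx heA) _ _,
    Function.update_self, contract_r, contract_r, hre, hrf, hrf₀, hk, Nat.add_sub_cancel,
    Nat.add_sub_cancel, seriesWeight]
  simp only [pow_succ]
  have hp : q * q⁻¹ = 1 := mul_inv_cancel₀ hq
  generalize q⁻¹ = p at hp ⊢
  field_simp
  linear_combination (p ^ k * w e * w f * ∏ x ∈ A, w x) * hp

theorem rank_erase_of_not_isColoop (he : e ∈ M.E) (h : ¬ M.IsColoop e) :
    M.r (M.E.erase e) = M.r M.E :=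
  le_antisymm (M.rank_mono _ _ (Finset.erase_subset e M.E) subset_rfl)
    (not_lt.1 fun hlt => h (M.isColoop_iff.2 ⟨he, hlt⟩))

theorem rank_contract_add_one (he : e ∈ M.E) (hre : M.r {e} = 1) :
    (M.contract e he).r (M.contract e he).E + 1 = M.r M.E := by
  rw [contract_E, contract_r, Finset.insert_erase he, hre]
  have := M.rank_mono {e} M.E (Finset.singleton_subset_iff.2 he) subset_rfl
  omega

/-- The hypotheses of the theorem on the weights, with `-1 - √(1-q) < γ_e < -1 + √(1-q)`
written as `(1 + γ_e)^2 < 1 - q`. -/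
structure SignAdmissible (M : RankMatroid α) (q : ℚ) (w : α → ℚ) : Prop where
  loop : ∀ e, M.IsLoop e → -1 < w e
  coloop : ∀ e, M.IsColoop e → w e < -q
  normal : ∀ e ∈ M.E, ¬ M.IsLoop e → ¬ M.IsColoop e → (1 + w e) ^ 2 < 1 - q

theorem SignAdmissible.delete_of_isColoop_iff (h : M.SignAdmissible q w)
    (hC : ∀ g ≠ e, (M.delete e).IsColoop g ↔ M.IsColoop g) : (M.delete e).SignAdmissible q w where
  loop g hg := h.loop g (isLoop_delete_iff.1 hg).2
  coloop g hg := h.coloop g ((hC g (Finset.ne_of_mem_erase hg.1)).1 hg)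
  normal g hg hl hc := h.normal g (Finset.mem_of_mem_erase hg)
    (fun hl' => hl (isLoop_delete_iff.2 ⟨Finset.ne_of_mem_erase hg, hl'⟩))
    (fun hc' => hc ((hC g (Finset.ne_of_mem_erase hg)).2 hc'))

theorem SignAdmissible.delete_of_isLoop (h : M.SignAdmissible q w) (he : M.IsLoop e) :
    (M.delete e).SignAdmissible q w :=
  h.delete_of_isColoop_iff fun _ hg => isColoop_delete_iff_of_rank_insert (c := 0) he.1 hg
    fun _ _ hA => M.rank_insert_of_isLoop he (hA.trans (Finset.erase_subset e M.E))

theorem SignAdmissible.delete_of_isColoop (h : M.SignAdmissible q w) (he : M.IsColoop e) :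
    (M.delete e).SignAdmissible q w :=
  h.delete_of_isColoop_iff fun _ hg => isColoop_delete_iff_of_rank_insert he.1 hg
    fun _ _ hA => M.rank_insert_of_isColoop he hA

theorem SignAdmissible.delete_of_parallel (h : M.SignAdmissible q w) (hq : 0 ≤ q)
    (hL : ∀ g, ¬ M.IsLoop g) (hC : ∀ g, ¬ M.IsColoop g) (he : e ∈ M.E) (hf : f ∈ M.E)
    (hef : e ≠ f) (hpar : M.r {e, f} ≤ 1) :
    (M.delete f).SignAdmissible q (Function.update w e (parallelWeight (w e) (w f))) := by
  have hw g (hg : g ∈ M.E) := h.normal g hg (hL g) (hC g)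
  obtain ⟨hlt, hsq⟩ := parallelWeight_bounds hq (hw e he) (hw f hf)
  have hre := M.rank_singleton_eq_one he (hL e)
  refine ⟨fun g hg => (hL g (isLoop_delete_iff.1 hg).2).elim, fun g hg => ?_, fun g hg _ _ => ?_⟩
  · obtain rfl | hge := eq_or_ne g e
    · rwa [Function.update_self]
    refine (hC g (((isColoop_delete_iff_of_rank_insert (c := 0) hf
      (Finset.ne_of_mem_erase hg.1)) fun A hA hAE => ?_).1 hg)).elim
    exact M.rank_insert_of_rank_pair_le (by omega) hf
      (hA (Finset.mem_erase.2 ⟨hge.symm, Finset.mem_erase.2 ⟨hef, he⟩⟩))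
      (hAE.trans (Finset.erase_subset f M.E))
  · obtain rfl | hge := eq_or_ne g e
    · rwa [Function.update_self]
    rw [Function.update_of_ne hge]
    exact hw g (Finset.mem_of_mem_erase hg)

theorem SignAdmissible.of_forall_sq_lt (hL : ∀ g, ¬ M.IsLoop g) (hC : ∀ g, ¬ M.IsColoop g)
    (hw : ∀ g ∈ M.E, (1 + w g) ^ 2 < 1 - q) : M.SignAdmissible q w :=
  ⟨fun g hg => (hL g hg).elim, fun g hg => (hC g hg).elim, fun g hg _ _ => hw g hg⟩

theorem not_isLoop_contract (hP : ∀ e ∈ M.E, ∀ f ∈ M.E, e ≠ f → 1 < M.r {e, f}) (he : e ∈ M.E)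
    (hre : M.r {e} = 1) : ¬ (M.contract e he).IsLoop f := fun hf => by
  obtain ⟨hfe, hf, hr⟩ := (isLoop_contract_iff he).1 hf
  have := hP e he f hf hfe.symm
  omega

theorem not_isColoop_contract (hC : ∀ g, ¬ M.IsColoop g) (he : e ∈ M.E) :
    ¬ (M.contract e he).IsColoop f := fun hf =>
  hC f ((isColoop_contract_iff he (Finset.ne_of_mem_erase hf.1)).1 hf)

theorem SignAdmissible.contract_of_series (h : M.SignAdmissible q w)
    (hL : ∀ g, ¬ M.IsLoop g) (hC : ∀ g, ¬ M.IsColoop g)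
    (hP : ∀ e ∈ M.E, ∀ f ∈ M.E, e ≠ f → 1 < M.r {e, f}) (hf : f ∈ M.E)
    (hser : (M.delete f).IsColoop e) :
    (M.contract f hf).SignAdmissible q (Function.update w e (seriesWeight q (w e) (w f))) := by
  have hw g (hg : g ∈ M.E) := h.normal g hg (hL g) (hC g)
  refine .of_forall_sq_lt (fun _ => not_isLoop_contract hP hf (M.rank_singleton_eq_one hf (hL f)))
    (fun _ => not_isColoop_contract hC hf) fun g hg => ?_
  obtain rfl | hge := eq_or_ne g e
  · rw [Function.update_self]
    exact (seriesWeight_bounds (hw g (Finset.mem_of_mem_erase hser.1)) (hw f hf)).2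
  rw [Function.update_of_ne hge]
  exact hw g (Finset.mem_of_mem_erase hg)

theorem sign_mul_Zt_pos_of_isLoop (he : M.IsLoop e) (hw : -1 < w e)
    (hN : 0 < (-1) ^ (M.delete e).r (M.delete e).E * Zt (M.delete e) q w) :
    0 < (-1) ^ M.r M.E * Zt M q w := by
  have hr : M.r (M.E.erase e) = M.r M.E := by
    simpa [Finset.insert_erase he.1] using
      (M.rank_insert_of_isLoop he (Finset.erase_subset e M.E)).symm
  rw [delete_E, delete_r, hr] at hN
  rw [Zt_eq_mul_Zt_delete_of_isLoop he, mul_left_comm]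
  exact mul_pos (by linarith) hN

theorem sign_mul_Zt_pos_of_isColoop (hq : 0 < q) (he : M.IsColoop e) (hw : w e < -q)
    (hN : 0 < (-1) ^ (M.delete e).r (M.delete e).E * Zt (M.delete e) q w) :
    0 < (-1) ^ M.r M.E * Zt M q w := by
  have hr : M.r M.E = M.r (M.E.erase e) + 1 := by
    simpa [Finset.insert_erase he.1] using M.rank_insert_of_isColoop he subset_rfl
  have hc : q⁻¹ * w e < -1 := (inv_mul_lt_iff₀ hq).2 (by linarith)
  rw [delete_E, delete_r] at hN
  rw [Zt_eq_mul_Zt_delete_of_isColoop he, hr]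
  exact (mul_pos (show 0 < -(1 + q⁻¹ * w e) by linarith) hN).trans_eq (by ring)

theorem sign_mul_Zt_pos_of_parallel (he : e ∈ M.E) (hf : f ∈ M.E) (hef : e ≠ f)
    (hpar : M.r {e, f} ≤ 1) (hre : M.r {e} = 1) (hrf : M.r {f} = 1) (hfC : ¬ M.IsColoop f)
    (hN : 0 < (-1) ^ (M.delete f).r (M.delete f).E *
      Zt (M.delete f) q (Function.update w e (parallelWeight (w e) (w f)))) :
    0 < (-1) ^ M.r M.E * Zt M q w := by
  rwa [Zt_eq_Zt_delete_of_parallel he hf hef hpar hre hrf, ← rank_erase_of_not_isColoop hf hfC]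

theorem sign_mul_Zt_pos_of_series (hq : 0 < q) (he : e ∈ M.E) (hf : f ∈ M.E)
    (hrf : M.r {f} = 1) (hser : (M.delete f).IsColoop e) (heC : ¬ M.IsColoop e)
    (hD : q + w e + w f < 0)
    (hN : 0 < (-1) ^ (M.contract f hf).r (M.contract f hf).E *
      Zt (M.contract f hf) q (Function.update w e (seriesWeight q (w e) (w f)))) :
    0 < (-1) ^ M.r M.E * Zt M q w := by
  have hc : q⁻¹ * (w e + w f) < -1 := (inv_mul_lt_iff₀ hq).2 (by linarith)
  rw [Zt_eq_mul_Zt_contract_of_series hq.ne' he hf hser heC hD.ne, ← rank_contract_add_one hf hrf]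
  exact (mul_pos (show 0 < -(1 + q⁻¹ * (w e + w f)) by linarith) hN).trans_eq (by ring)

theorem sign_mul_Zt_pos_of_delete_contract (hq : 0 < q) (he : e ∈ M.E) (hre : M.r {e} = 1)
    (heC : ¬ M.IsColoop e) (hw : (1 + w e) ^ 2 < 1 - q)
    (hD : 0 < (-1) ^ (M.delete e).r (M.delete e).E * Zt (M.delete e) q w)
    (hC : 0 < (-1) ^ (M.contract e he).r (M.contract e he).E * Zt (M.contract e he) q w) :
    0 < (-1) ^ M.r M.E * Zt M q w := by
  have hc : 0 < -(q⁻¹ * w e) := neg_pos.2 (mul_neg_of_pos_of_neg (inv_pos.2 hq) (by nlinarith))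
  rw [delete_E, delete_r, rank_erase_of_not_isColoop he heC, ← rank_contract_add_one he hre] at hD
  rw [Zt_eq_Zt_delete_add_Zt_contract he, hre, pow_one, ← rank_contract_add_one he hre]
  exact (add_pos hD (mul_pos hc hC)).trans_eq (by ring)

theorem SignAdmissible.sign_mul_Zt_pos (hq : 0 < q) (h : M.SignAdmissible q w) :
    0 < (-1) ^ M.r M.E * Zt M q w := by
  induction hn : M.E.card using Nat.strong_induction_on generalizing M w with
  | _ n ih =>
  subst hn
  have ih' {N : RankMatroid α} {w' : α → ℚ} (hN : N.E.card < M.E.card)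
      (h' : N.SignAdmissible q w') : 0 < (-1) ^ N.r N.E * Zt N q w' := ih _ hN h' rfl
  by_cases hL : ∃ e, M.IsLoop e
  · obtain ⟨e, he⟩ := hL
    exact sign_mul_Zt_pos_of_isLoop he (h.loop e he)
      (ih' (Finset.card_erase_lt_of_mem he.1) (h.delete_of_isLoop he))
  by_cases hC : ∃ e, M.IsColoop e
  · obtain ⟨e, he⟩ := hC
    exact sign_mul_Zt_pos_of_isColoop hq he (h.coloop e he)
      (ih' (Finset.card_erase_lt_of_mem he.1) (h.delete_of_isColoop he))
  push Not at hL hC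
  have hw e (he : e ∈ M.E) : (1 + w e) ^ 2 < 1 - q := h.normal e he (hL e) (hC e)
  have hr e (he : e ∈ M.E) : M.r {e} = 1 := M.rank_singleton_eq_one he (hL e)
  by_cases hP : ∃ e ∈ M.E, ∃ f ∈ M.E, e ≠ f ∧ M.r {e, f} ≤ 1
  · obtain ⟨e, he, f, hf, hef, hpar⟩ := hP
    exact sign_mul_Zt_pos_of_parallel he hf hef hpar (hr e he) (hr f hf) (hC f)
      (ih' (Finset.card_erase_lt_of_mem hf) (h.delete_of_parallel hq.le hL hC he hf hef hpar))
  push Not at hP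
  by_cases hS : ∃ e, ∃ f ∈ M.E, (M.delete f).IsColoop e
  · obtain ⟨e, f, hf, hser⟩ := hS
    have he := Finset.mem_of_mem_erase hser.1
    exact sign_mul_Zt_pos_of_series hq he hf (hr f hf) hser (hC e)
      (seriesWeight_bounds (hw e he) (hw f hf)).1
      (ih' (Finset.card_erase_lt_of_mem hf) (h.contract_of_series hL hC hP hf hser))
  push Not at hS
  obtain hE | ⟨e, he⟩ := M.E.eq_empty_or_nonempty
  · simp [Zt, hE, rank_empty]
  have hdel : (M.delete e).SignAdmissible q w := .of_forall_sq_lt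
    (fun g hg => hL g (isLoop_delete_iff.1 hg).2) (fun g => hS g e he)
    fun g hg => hw g (Finset.mem_of_mem_erase hg)
  have hcon : (M.contract e he).SignAdmissible q w := .of_forall_sq_lt
    (fun _ => not_isLoop_contract hP he (hr e he)) (fun _ => not_isColoop_contract hC he)
    fun g hg => hw g (Finset.mem_of_mem_erase hg)
  exact sign_mul_Zt_pos_of_delete_contract hq he (hr e he) (hC e) (hw e he)
    (ih' (Finset.card_erase_lt_of_mem he) hdel) (ih' (Finset.card_erase_lt_of_mem he) hcon)

end RankMatroid

theorem matroid_tutte_sign_small_q_general {α : Type} [DecidableEq α] (M : RankMatroid α)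
    (q : ℚ) (hq0 : 0 < q) (w : α → ℚ)
    (hloop : ∀ e ∈ M.E, M.IsLoop e → -1 < w e)
    (hcoloop : ∀ e ∈ M.E, M.IsColoop e → w e < -q)
    (hnormal : ∀ e ∈ M.E, ¬ M.IsLoop e → ¬ M.IsColoop e →
      -1 - Real.sqrt (1 - q) < (w e : ℝ) ∧ (w e : ℝ) < -1 + Real.sqrt (1 - q)) :
    0 < (-1 : ℚ) ^ M.r M.E * Zt M q w :=
  RankMatroid.SignAdmissible.sign_mul_Zt_pos hq0
    { loop := fun e he => hloop e he.1 he
      coloop := fun e he => hcoloop e he.1 he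
      normal := fun e he hl hc => one_add_sq_lt_of_lt_sqrt (hnormal e he hl hc) }

/-- for `0 < q < 1` and a weight function `𝛄` with `γ_e > -1` on loops,
`γ_e < -q` on coloops, and `-1-√(1-q) < γ_e < -1+√(1-q)` on all other elements,
one has `(-1)^{r(E)}·Z̃(M;q,𝛄) > 0`. -/
theorem matroid_tutte_sign_small_q {α : Type} [DecidableEq α] (M : RankMatroid α)
    (q : ℚ) (hq0 : 0 < q) (hq1 : q < 1) (w : α → ℚ)
    (hloop : ∀ e ∈ M.E, M.IsLoop e → -1 < w e)
    (hcoloop : ∀ e ∈ M.E, M.IsColoop e → w e < -q)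
    (hnormal : ∀ e ∈ M.E, ¬ M.IsLoop e → ¬ M.IsColoop e →
      -1 - Real.sqrt (1 - q) < (w e : ℝ) ∧ (w e : ℝ) < -1 + Real.sqrt (1 - q)) :
    0 < (-1 : ℚ) ^ M.r M.E * Zt M q w :=
  matroid_tutte_sign_small_q_general M q hq0 w hloop hcoloop hnormal
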